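/- arXiv:math/9301211 — 2 statements merged into one kernel-verified Lean document; each statement's English description precedes it below -/
import Mathlib

section
/- The ring ℤ[α_1, α_2, β_1, β_2] modulo the relations α_1² = α_2² = 1, α_1β_1 = β_1, β_1² = 2(1+α_1), β_2² = 2(1+α_2), α_2β_2 = β_2, α_1α_2 = α_1 + α_2 − 1, α_1β_2 = 2α_1 + β_2 − 2, β_1β_2 = 2β_1 + 2β_2 − 4, α_2β_1 = 2α_2 + β_1 − 2, is a free abelian group of rank 5 with basis 1, α_1, α_2, β_1, β_2. -/
open MvPolynomial

noncomputable section

/-- The polynomial ring `ℤ[α₁, α₂, β₁, β₂]`. -/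
abbrev P : Type := MvPolynomial (Fin 4) ℤ

def α₁ : P := X 0
def α₂ : P := X 1
def β₁ : P := X 2
def β₂ : P := X 3

/-- The ideal of relations defining `R_{F(2)}(SL₃(ℤ))`. -/
def relIdeal : Ideal P :=
  Ideal.span
    { α₁ ^ 2 - 1, α₂ ^ 2 - 1,
      α₁ * β₁ - β₁,
      β₁ ^ 2 - 2 * (1 + α₁), β₂ ^ 2 - 2 * (1 + α₂),
      α₂ * β₂ - β₂,
      α₁ * α₂ - (α₁ + α₂ - 1),
      α₁ * β₂ - (2 * α₁ + β₂ - 2),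
      β₁ * β₂ - (2 * β₁ + 2 * β₂ - 4),
      α₂ * β₁ - (2 * α₂ + β₁ - 2) }

def relSet : Set P :=
    { α₁ ^ 2 - 1, α₂ ^ 2 - 1,
      α₁ * β₁ - β₁,
      β₁ ^ 2 - 2 * (1 + α₁), β₂ ^ 2 - 2 * (1 + α₂),
      α₂ * β₂ - β₂,
      α₁ * α₂ - (α₁ + α₂ - 1),
      α₁ * β₂ - (2 * α₁ + β₂ - 2),
      β₁ * β₂ - (2 * β₁ + 2 * β₂ - 4),
      α₂ * β₁ - (2 * α₂ + β₁ - 2) }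

lemma relIdeal_eq : relIdeal = Ideal.span relSet := rfl

abbrev Q : Type := P ⧸ relIdeal

def pr : P →+* Q := Ideal.Quotient.mk relIdeal

lemma pr_rel (r : P) (hm : r ∈ relSet) : pr r = 0 :=
  Ideal.Quotient.eq_zero_iff_mem.mpr (relIdeal_eq ▸ Ideal.subset_span hm)

def a1 : Q := pr α₁
def a2 : Q := pr α₂
def b1 : Q := pr β₁
def b2 : Q := pr β₂

lemma r1 : a1 * a1 = 1 := by
  have h := pr_rel (α₁ ^ 2 - 1) (by simp [relSet])
  rw [map_sub, map_pow, map_one, sub_eq_zero] at h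
  rw [← sq]; exact h

lemma r2 : a2 * a2 = 1 := by
  have h := pr_rel (α₂ ^ 2 - 1) (by simp [relSet])
  rw [map_sub, map_pow, map_one, sub_eq_zero] at h
  rw [← sq]; exact h

lemma r3 : a1 * b1 = b1 := by
  have h := pr_rel (α₁ * β₁ - β₁) (by simp [relSet])
  rw [map_sub, map_mul, sub_eq_zero] at h
  exact h

lemma r4 : b1 * b1 = 2 * (1 + a1) := by
  have h := pr_rel (β₁ ^ 2 - 2 * (1 + α₁)) (by simp [relSet])
  rw [map_sub, map_pow, sub_eq_zero] at h
  show pr β₁ * pr β₁ = _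
  rw [← sq, h]; simp [a1, pr, map_ofNat]

lemma r5 : b2 * b2 = 2 * (1 + a2) := by
  have h := pr_rel (β₂ ^ 2 - 2 * (1 + α₂)) (by simp [relSet])
  rw [map_sub, map_pow, sub_eq_zero] at h
  show pr β₂ * pr β₂ = _
  rw [← sq, h]; simp [a2, pr, map_ofNat]

lemma r6 : a2 * b2 = b2 := by
  have h := pr_rel (α₂ * β₂ - β₂) (by simp [relSet])
  rw [map_sub, map_mul, sub_eq_zero] at h
  exact h

lemma r7 : a1 * a2 = a1 + a2 - 1 := by
  have h := pr_rel (α₁ * α₂ - (α₁ + α₂ - 1)) (by simp [relSet])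
  rw [map_sub, map_mul, sub_eq_zero] at h
  show pr α₁ * pr α₂ = _
  rw [h]; simp [a1, a2, pr]

lemma r8 : a1 * b2 = 2 * a1 + b2 - 2 := by
  have h := pr_rel (α₁ * β₂ - (2 * α₁ + β₂ - 2)) (by simp [relSet])
  rw [map_sub, map_mul, sub_eq_zero] at h
  show pr α₁ * pr β₂ = _
  rw [h]; simp [a1, b2, pr, map_ofNat]

lemma r9 : b1 * b2 = 2 * b1 + 2 * b2 - 4 := by
  have h := pr_rel (β₁ * β₂ - (2 * β₁ + 2 * β₂ - 4)) (by simp [relSet])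
  rw [map_sub, map_mul, sub_eq_zero] at h
  show pr β₁ * pr β₂ = _
  rw [h]; simp [b1, b2, pr, map_ofNat]

lemma r10 : a2 * b1 = 2 * a2 + b1 - 2 := by
  have h := pr_rel (α₂ * β₁ - (2 * α₂ + β₁ - 2)) (by simp [relSet])
  rw [map_sub, map_mul, sub_eq_zero] at h
  show pr α₂ * pr β₁ = _
  rw [h]; simp [a2, b1, pr, map_ofNat]

def v : Fin 5 → Q := ![1, a1, a2, b1, b2]

def S : Submodule ℤ Q := Submodule.span ℤ (Set.range v)

lemma hv (j : Fin 5) : v j ∈ S := Submodule.subset_span ⟨j, rfl⟩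

lemma comb_mem (c0 c1 c2 c3 c4 : ℤ) :
    (c0 : Q) + c1 * a1 + c2 * a2 + c3 * b1 + c4 * b2 ∈ S := by
  refine add_mem (add_mem (add_mem (add_mem ?_ ?_) ?_) ?_) ?_
  · simpa [v, zsmul_eq_mul] using S.smul_mem c0 (hv 0)
  · simpa [v, zsmul_eq_mul] using S.smul_mem c1 (hv 1)
  · simpa [v, zsmul_eq_mul] using S.smul_mem c2 (hv 2)
  · simpa [v, zsmul_eq_mul] using S.smul_mem c3 (hv 3)
  · simpa [v, zsmul_eq_mul] using S.smul_mem c4 (hv 4)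

lemma mul_gen_mem (i : Fin 4) (x : Q) (hx : x ∈ S) : x * pr (X i) ∈ S := by
  induction hx using Submodule.span_induction with
  | mem y hy =>
      obtain ⟨j, rfl⟩ := hy
      fin_cases j <;> fin_cases i
      · show (1 : Q) * a1 ∈ S; rw [one_mul]; simpa [v] using hv 1
      · show (1 : Q) * a2 ∈ S; rw [one_mul]; simpa [v] using hv 2
      · show (1 : Q) * b1 ∈ S; rw [one_mul]; simpa [v] using hv 3
      · show (1 : Q) * b2 ∈ S; rw [one_mul]; simpa [v] using hv 4
      · show a1 * a1 ∈ S; rw [r1]; simpa [v] using hv 0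
      · show a1 * a2 ∈ S; rw [r7]
        convert comb_mem (-1) 1 1 0 0 using 1; push_cast; ring
      · show a1 * b1 ∈ S; rw [r3]; simpa [v] using hv 3
      · show a1 * b2 ∈ S; rw [r8]
        convert comb_mem (-2) 2 0 0 1 using 1; push_cast; ring
      · show a2 * a1 ∈ S; rw [mul_comm, r7]
        convert comb_mem (-1) 1 1 0 0 using 1; push_cast; ring
      · show a2 * a2 ∈ S; rw [r2]; simpa [v] using hv 0
      · show a2 * b1 ∈ S; rw [r10]
        convert comb_mem (-2) 0 2 1 0 using 1; push_cast; ring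
      · show a2 * b2 ∈ S; rw [r6]; simpa [v] using hv 4
      · show b1 * a1 ∈ S; rw [mul_comm, r3]; simpa [v] using hv 3
      · show b1 * a2 ∈ S; rw [mul_comm, r10]
        convert comb_mem (-2) 0 2 1 0 using 1; push_cast; ring
      · show b1 * b1 ∈ S; rw [r4]
        convert comb_mem 2 2 0 0 0 using 1; push_cast; ring
      · show b1 * b2 ∈ S; rw [r9]
        convert comb_mem (-4) 0 0 2 2 using 1; push_cast; ring
      · show b2 * a1 ∈ S; rw [mul_comm, r8]
        convert comb_mem (-2) 2 0 0 1 using 1; push_cast; ring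
      · show b2 * a2 ∈ S; rw [mul_comm, r6]; simpa [v] using hv 4
      · show b2 * b1 ∈ S; rw [mul_comm, r9]
        convert comb_mem (-4) 0 0 2 2 using 1; push_cast; ring
      · show b2 * b2 ∈ S; rw [r5]
        convert comb_mem 2 0 2 0 0 using 1; push_cast; ring
  | zero => simpa using S.zero_mem
  | add y z _ _ hy hz => rw [add_mul]; exact S.add_mem hy hz
  | smul c y _ hy => rw [smul_mul_assoc]; exact S.smul_mem c hy

lemma span_top : ⊤ ≤ Submodule.span ℤ (Set.range v) := by
  intro q _
  obtain ⟨p, rfl⟩ := Ideal.Quotient.mk_surjective q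
  show pr p ∈ S
  induction p using MvPolynomial.induction_on with
  | C a =>
      have : pr (C a) = (a : Q) := by simp [pr]
      rw [this]
      simpa using comb_mem a 0 0 0 0
  | add p q hp hq => rw [map_add]; exact S.add_mem (hp trivial) (hq trivial)
  | mul_X p i hp => rw [map_mul]; exact mul_gen_mem i _ (hp trivial)

def χ : Fin 5 → Fin 4 → ℤ :=
  ![![1, 1, 2, 2], ![1, 1, 2, -2], ![1, -1, 2, 0], ![1, 1, -2, 2], ![-1, 1, 0, 2]]

lemma ker_rel (j : Fin 5) : relIdeal ≤ RingHom.ker (eval (χ j)) := by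
  rw [relIdeal_eq, Ideal.span_le]
  intro x hx
  simp only [relSet, Set.mem_insert_iff, Set.mem_singleton_iff] at hx
  rcases hx with rfl | rfl | rfl | rfl | rfl | rfl | rfl | rfl | rfl | rfl <;>
    fin_cases j <;>
      simp [α₁, α₂, β₁, β₂, RingHom.mem_ker, χ] <;> ring_nf <;> decide

def g : Q →ₗ[ℤ] (Fin 5 → ℤ) :=
  LinearMap.pi fun j =>
    (Ideal.Quotient.lift relIdeal (eval (χ j)) fun a ha => ker_rel j ha).toAddMonoidHom.toIntLinearMap

lemma g_pr (p : P) (j : Fin 5) : g (pr p) j = eval (χ j) p := rfl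

lemma lin_indep : LinearIndependent ℤ v := by
  apply LinearIndependent.of_comp g
  rw [Fintype.linearIndependent_iff]
  intro c hc
  have key : ∀ k : Fin 5, ∑ i, c i • g (v i) k = 0 := by
    intro k
    have := congrFun hc k
    simpa using this
  have e0 := key 0
  have e1 := key 1
  have e2 := key 2
  have e3 := key 3
  have e4 := key 4
  simp only [Fin.sum_univ_five, v, a1, a2, b1, b2, Matrix.cons_val_zero, Matrix.cons_val_one,
    Matrix.head_cons, Matrix.cons_val_two, Matrix.tail_cons, Matrix.cons_val_three,
    Matrix.cons_val_four, smul_eq_mul] at e0 e1 e2 e3 e4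
  have hg1 : ∀ k, g (1 : Q) k = 1 := fun k => by
    rw [show (1 : Q) = pr 1 from rfl, g_pr, map_one]
  rw [hg1] at e0 e1 e2 e3 e4
  simp only [g_pr, χ, α₁, α₂, β₁, β₂, eval_X, map_one, Matrix.cons_val_zero, Matrix.cons_val_one,
    Matrix.head_cons, Matrix.cons_val_two, Matrix.tail_cons, Matrix.cons_val_three,
    Matrix.cons_val_four] at e0 e1 e2 e3 e4
  intro k
  fin_cases k
  · show c 0 = 0; omega
  · show c 1 = 0; omega
  · show c 2 = 0; omega
  · show c 3 = 0; omega
  · show c 4 = 0; omega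

/-- The quotient of `ℤ[α₁, α₂, β₁, β₂]` by the nine listed relations is a free
abelian group of rank 5 with basis `1, α₁, α₂, β₁, β₂`. -/
theorem relQuot_basis :
    ∃ b : Module.Basis (Fin 5) ℤ (P ⧸ relIdeal),
      b 0 = 1 ∧
      b 1 = Ideal.Quotient.mk relIdeal α₁ ∧
      b 2 = Ideal.Quotient.mk relIdeal α₂ ∧
      b 3 = Ideal.Quotient.mk relIdeal β₁ ∧
      b 4 = Ideal.Quotient.mk relIdeal β₂ := by
  refine ⟨Module.Basis.mk lin_indep span_top, ?_, ?_, ?_, ?_, ?_⟩ <;>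
    simp [Module.Basis.mk_apply, v, a1, a2, b1, b2, pr]

end
end

section
/- For Γ with finitely many conjugacy classes of elements of finite order, let n(Γ) be the number of conjugacy classes of elements of finite order and, for a prime p, let n_p(Γ) be the number of conjugacy classes of elements of p-power order; then n(Γ) − 1 ≥ Σ_p (n_p(Γ) − 1), where the sum runs over primes p, with equality if every finite-order element of Γ has prime power order. -/
private lemma orderOf_eq_of_mk_eq_mk {Γ : Type*} [Group Γ] {a b : Γ}
    (h : ConjClasses.mk a = ConjClasses.mk b) : orderOf a = orderOf b := by
  obtain ⟨c, hc⟩ := ConjClasses.mk_eq_mk_iff_isConj.mp h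
  exact SemiconjBy.orderOf_eq _ hc

/-- The number of conjugacy classes of elements of finite order in `Γ`. -/
noncomputable def nFin (Γ : Type*) [Group Γ] : ℕ :=
  Nat.card {c : ConjClasses Γ // ∃ γ, c = ConjClasses.mk γ ∧ IsOfFinOrder γ}

/-- The number of conjugacy classes of elements of `p`-power order in `Γ`. -/
noncomputable def nP (p : ℕ) (Γ : Type*) [Group Γ] : ℕ :=
  Nat.card {c : ConjClasses Γ // ∃ γ, c = ConjClasses.mk γ ∧ ∃ k : ℕ, orderOf γ = p ^ k}

/-- If `Γ` has finitely many conjugacy classes of elements of finite order then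
`n(Γ) − 1 ≥ Σ_p (n_p(Γ) − 1)`, the sum running over primes `p`: every finite
partial sum is at most `n(Γ) − 1`. Equality holds if every finite-order element
of `Γ` has prime-power order: then there is a finite set of primes carrying the
whole sum, whose total is exactly `n(Γ) − 1`. -/
theorem nFin_sub_one_ge_sum_nP_sub_one {Γ : Type*} [Group Γ]
    (hfin : Finite {c : ConjClasses Γ // ∃ γ, c = ConjClasses.mk γ ∧ IsOfFinOrder γ}) :
    (∀ P : Finset {p : ℕ // p.Prime},
      ∑ p ∈ P, (nP p.1 Γ - 1) ≤ nFin Γ - 1) ∧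
    ((∀ γ : Γ, IsOfFinOrder γ → ∃ (p k : ℕ), p.Prime ∧ orderOf γ = p ^ k) →
      ∃ P : Finset {p : ℕ // p.Prime},
        (∀ q : {p : ℕ // p.Prime}, q ∉ P → nP q.1 Γ = 1) ∧
        ∑ p ∈ P, (nP p.1 Γ - 1) = nFin Γ - 1) := by
  classical
  set c1 : ConjClasses Γ := ConjClasses.mk 1 with hc1
  set rep : ConjClasses Γ → Γ := fun c => (ConjClasses.exists_rep c).choose with hrepdef
  have hrep : ∀ c, c = ConjClasses.mk (rep c) :=
    fun c => ((ConjClasses.exists_rep c).choose_spec).symm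
  set SF : Set (ConjClasses Γ) :=
    {c | ∃ γ, c = ConjClasses.mk γ ∧ IsOfFinOrder γ} with hSFdef
  set SP : ℕ → Set (ConjClasses Γ) :=
    fun p => {c | ∃ γ, c = ConjClasses.mk γ ∧ ∃ k : ℕ, orderOf γ = p ^ k} with hSPdef
  have hSF : SF.Finite := Set.finite_coe_iff.mp hfin
  have hsub : ∀ p : {p : ℕ // p.Prime}, SP p.1 ⊆ SF := by
    rintro p c ⟨γ, rfl, k, hk⟩
    refine ⟨γ, rfl, ?_⟩
    rw [← orderOf_pos_iff, hk]
    exact pow_pos p.2.pos k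
  have hSPfin : ∀ p : {p : ℕ // p.Prime}, (SP p.1).Finite :=
    fun p => hSF.subset (hsub p)
  set F : Finset (ConjClasses Γ) := hSF.toFinset with hF
  set Fp : {p : ℕ // p.Prime} → Finset (ConjClasses Γ) :=
    fun p => (hSPfin p).toFinset with hFp
  have hnFin : nFin Γ = F.card := by
    rw [hF, ← Set.ncard_eq_toFinset_card SF hSF]
    exact Nat.card_coe_set_eq SF
  have hnP : ∀ p : {p : ℕ // p.Prime}, nP p.1 Γ = (Fp p).card := by
    intro p
    rw [hFp, ← Set.ncard_eq_toFinset_card (SP p.1) (hSPfin p)]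
    exact Nat.card_coe_set_eq (SP p.1)
  have h1F : c1 ∈ F := hSF.mem_toFinset.mpr ⟨1, rfl, IsOfFinOrder.one⟩
  have h1p : ∀ p : {p : ℕ // p.Prime}, c1 ∈ Fp p := fun p =>
    (hSPfin p).mem_toFinset.mpr ⟨1, rfl, 0, by simp⟩
  have hFpF : ∀ p : {p : ℕ // p.Prime}, Fp p ⊆ F := by
    intro p c hc
    exact hSF.mem_toFinset.mpr (hsub p ((hSPfin p).mem_toFinset.mp hc))
  -- a class of nontrivial p-power order determines p
  have hdet : ∀ (p : {p : ℕ // p.Prime}) (c : ConjClasses Γ), c ∈ Fp p → c ≠ c1 →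
      ∃ k : ℕ, k ≠ 0 ∧ orderOf (rep c) = p.1 ^ k := by
    rintro p c hc hne
    obtain ⟨δ, hδ, k, hk⟩ := (hSPfin p).mem_toFinset.mp hc
    have hoo : orderOf (rep c) = orderOf δ :=
      orderOf_eq_of_mk_eq_mk ((hrep c).symm.trans hδ)
    refine ⟨k, ?_, hoo.trans hk⟩
    rintro rfl
    rw [pow_zero, ← hoo, orderOf_eq_one_iff] at hk
    exact hne (by rw [hc1, hrep c, hk])
  have hpairwise : ∀ p q : {p : ℕ // p.Prime}, p ≠ q →
      Disjoint ((Fp p).erase c1) ((Fp q).erase c1) := by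
    intro p q hpq
    rw [Finset.disjoint_left]
    intro c hcp hcq
    obtain ⟨hne, hcp⟩ := Finset.mem_erase.mp hcp
    obtain ⟨-, hcq⟩ := Finset.mem_erase.mp hcq
    obtain ⟨k, hk0, hk⟩ := hdet p c hcp hne
    obtain ⟨l, hl0, hl⟩ := hdet q c hcq hne
    have : p.1 ∣ q.1 ^ l := by
      rw [← hl, hk]
      exact dvd_pow_self _ hk0
    exact hpq (Subtype.ext ((Nat.prime_dvd_prime_iff_eq p.2 q.2).mp (p.2.dvd_of_dvd_pow this)))
  have hsum : ∀ P : Finset {p : ℕ // p.Prime},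
      ∑ p ∈ P, (nP p.1 Γ - 1) = (P.biUnion fun p => (Fp p).erase c1).card := by
    intro P
    rw [Finset.card_biUnion (fun p _ q _ h => hpairwise p q h)]
    refine Finset.sum_congr rfl fun p _ => ?_
    rw [hnP p, Finset.card_erase_of_mem (h1p p)]
  have hkey : ∀ P : Finset {p : ℕ // p.Prime},
      (P.biUnion fun p => (Fp p).erase c1) ⊆ F.erase c1 := by
    intro P c hc
    obtain ⟨p, -, hc⟩ := Finset.mem_biUnion.mp hc
    obtain ⟨hne, hc⟩ := Finset.mem_erase.mp hc
    exact Finset.mem_erase.mpr ⟨hne, hFpF p hc⟩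
  constructor
  · intro P
    rw [hsum P, hnFin, ← Finset.card_erase_of_mem h1F]
    exact Finset.card_le_card (hkey P)
  · intro hpp
    set g : ConjClasses Γ → ℕ := fun c => (orderOf (rep c)).minFac with hg
    -- structure of nontrivial finite-order classes
    have hstruct : ∀ c ∈ F.erase c1, (g c).Prime ∧ ∃ k : ℕ, k ≠ 0 ∧
        orderOf (rep c) = (g c) ^ k := by
      intro c hc
      obtain ⟨hne, hcF⟩ := Finset.mem_erase.mp hc
      obtain ⟨γ, hγ, hfo⟩ := hSF.mem_toFinset.mp hcF
      have hfo' : IsOfFinOrder (rep c) := by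
        rw [← orderOf_pos_iff, orderOf_eq_of_mk_eq_mk ((hrep c).symm.trans hγ),
          orderOf_pos_iff]
        exact hfo
      obtain ⟨q, k, hq, hk⟩ := hpp (rep c) hfo'
      have hk0 : k ≠ 0 := by
        rintro rfl
        rw [pow_zero, orderOf_eq_one_iff] at hk
        exact hne (by rw [hc1, hrep c, hk])
      have hgc : g c = q := by
        rw [hg]; dsimp only; rw [hk, Nat.Prime.pow_minFac hq hk0]
      exact ⟨hgc ▸ hq, k, hk0, by rw [hgc, ← hk]⟩
    set P : Finset {p : ℕ // p.Prime} :=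
      (F.erase c1).attach.image (fun c => (⟨g c.1, (hstruct c.1 c.2).1⟩ :
        {p : ℕ // p.Prime})) with hP
    -- membership in Fp (g c) for nontrivial classes
    have hmem : ∀ c ∈ F.erase c1, ∀ (hq : (g c).Prime),
        c ∈ (Fp ⟨g c, hq⟩).erase c1 := by
      intro c hc hq
      obtain ⟨h1, k, hk0, hk⟩ := hstruct c hc
      exact Finset.mem_erase.mpr ⟨(Finset.mem_erase.mp hc).1,
        (hSPfin ⟨g c, hq⟩).mem_toFinset.mpr ⟨rep c, hrep c, k, hk⟩⟩
    refine ⟨P, ?_, ?_⟩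
    · intro q hq
      have hempty : (Fp q).erase c1 = ∅ := by
        rw [Finset.eq_empty_iff_forall_notMem]
        intro c hc
        obtain ⟨hne, hcq⟩ := Finset.mem_erase.mp hc
        obtain ⟨k, hk0, hk⟩ := hdet q c hcq hne
        have hcF : c ∈ F.erase c1 := Finset.mem_erase.mpr ⟨hne, hFpF q hcq⟩
        have hgc : g c = q.1 := by
          rw [hg]; dsimp only; rw [hk, Nat.Prime.pow_minFac q.2 hk0]
        apply hq
        rw [hP]
        exact Finset.mem_image.mpr ⟨⟨c, hcF⟩, Finset.mem_attach _ _,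
          Subtype.ext hgc⟩
      have hsing : Fp q = {c1} := by
        have h1 : Fp q ⊆ {c1} := by
          intro c hc
          rcases eq_or_ne c c1 with h | h
          · simp [h]
          · exact absurd (Finset.mem_erase.mpr ⟨h, hc⟩) (by rw [hempty]; simp)
        exact Finset.Subset.antisymm h1 (Finset.singleton_subset_iff.mpr (h1p q))
      rw [hnP q, hsing, Finset.card_singleton]
    · rw [hsum P, hnFin, ← Finset.card_erase_of_mem h1F]
      congr 1
      refine Finset.Subset.antisymm (hkey P) ?_
      intro c hc
      refine Finset.mem_biUnion.mpr ⟨⟨g c, (hstruct c hc).1⟩, ?_, hmem c hc _⟩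
      rw [hP]
      exact Finset.mem_image.mpr ⟨⟨c, hc⟩, Finset.mem_attach _ _, rfl⟩
end
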